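/- For all n ≥ 0, st(2n+1) + st(4n+1) is even. -/
import Mathlib


def st : ℕ → ℕ
  | 0 => 0
  | 1 => 1
  | n + 2 => if (n + 2) % 2 = 0 then st ((n + 2) / 2) else st (n + 1) + st n + st (n - 1)
decreasing_by all_goals omega

lemma st_even (n : ℕ) : st (2 * n) = st n := by
  match n with
  | 0 => rfl
  | n + 1 =>
    show st (2 * n + 2) = _
    rw [st]
    have h : (2 * n + 2) % 2 = 0 := by omega
    rw [if_pos h]
    congr 1
    omega

lemma st_odd (n : ℕ) : st (2 * n + 3) = st (2 * n + 2) + st (2 * n + 1) + st (2 * n) := by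
  show st ((2 * n + 1) + 2) = _
  rw [st]
  have h : ¬ (2 * n + 1 + 2) % 2 = 0 := by omega
  rw [if_neg h]
  congr 2

lemma st_key (n : ℕ) : st (2 * n + 1) % 2 = (st n + 1) % 2 := by
  induction n with
  | zero => simp [st]
  | succ n ih =>
    rw [show 2 * (n + 1) + 1 = 2 * n + 3 by ring, st_odd,
      show 2 * n + 2 = 2 * (n + 1) by ring, st_even, st_even]
    omega

theorem st_parity (n : ℕ) : Even (st (2 * n + 1) + st (4 * n + 1)) := by
  have h1 := st_key n
  have h2 := st_key (2 * n)
  rw [st_even] at h2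
  rw [show 4 * n + 1 = 2 * (2 * n) + 1 by ring, Nat.even_iff]
  omega
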